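/- arXiv:1306.0220 — 2 statements merged into one kernel-verified Lean document; each statement's English description precedes it below -/
import Mathlib

section
/- Let t, ρ : ℝ → ℝ be twice differentiable functions of τ satisfying t''·cosh²ρ + 2 t' ρ' sinh ρ cosh ρ = 0, ρ'' + sinh ρ cosh ρ·(t'² + 1) = 0, and ρ'² − t'²cosh²ρ + sinh²ρ = 0. Define Y : ℝ² → ℝ^8 by Y(τ,σ) = 2(cosh ρ(τ) cos t(τ), 0, 0, sinh ρ(τ) cos σ, 0, sinh ρ(τ) sin σ, 0, cosh ρ(τ) sin t(τ)). Then Y together with Λ(τ,σ) := −2 sinh²ρ(τ) satisfies the conformal-gauge string system on AdS₇ of radius ℓ = 2 (with p = 5); in particular the induced multiplier is Λ̃ = η(∂σY,∂σY) = 4 sinh²ρ. -/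
noncomputable section

open Real

/-- Sign of the AdS embedding metric η = diag(−1, 1, …, 1, −1) on ℝ^{p+3}. -/
def etaSign (p : ℕ) (μ : Fin (p + 3)) : ℝ :=
  if μ.val = 0 ∨ μ.val = p + 2 then -1 else 1

/-- The AdS embedding bilinear form η(u,v) = −u₀v₀ + u₁v₁ + ⋯ + u_{p+1}v_{p+1} − u_{p+2}v_{p+2}. -/
def etaForm (p : ℕ) (u v : Fin (p + 3) → ℝ) : ℝ :=
  ∑ μ, etaSign p μ * u μ * v μ

/-- The conformal-gauge string system on AdS_{p+2} of radius ℓ. -/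
def IsConformalString (p : ℕ) (ℓ : ℝ) (Y : ℝ → ℝ → Fin (p + 3) → ℝ)
    (Λ : ℝ → ℝ → ℝ) : Prop :=
  (∀ τ σ μ,
    deriv (fun t => deriv (fun t' => Y t' σ μ) t) τ
      - deriv (fun s => deriv (fun s' => Y τ s' μ) s) σ = Λ τ σ * Y τ σ μ) ∧
  (∀ τ σ, etaForm p (Y τ σ) (Y τ σ) = -ℓ ^ 2) ∧
  (∀ τ σ, etaForm p (fun μ => deriv (fun t => Y t σ μ) τ)
      (fun μ => deriv (fun s => Y τ s μ) σ) = 0) ∧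
  (∀ τ σ, etaForm p (fun μ => deriv (fun t => Y t σ μ) τ)
        (fun μ => deriv (fun t => Y t σ μ) τ)
      + etaForm p (fun μ => deriv (fun s => Y τ s μ) σ)
        (fun μ => deriv (fun s => Y τ s μ) σ) = 0)

/-!
The ansatz places a timelike circle `ℓ cosh ρ (cos t, sin t)` and a spacelike circle
`ℓ sinh ρ (cos σ, sin σ)` in the directions `0, 7` and `3, 5` of `ℝ^{2,6}`, so `η(Y, Y) = -ℓ²` is
`cosh² ρ - sinh² ρ = 1`, and `∂τY ⟂ ∂σY` because the two circles are orthogonal. With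
`ρ'²` and `ρ''` eliminated by the Virasoro constraint and the `ρ`-equation, and `t''` by the
`t`-equation, the radial factors satisfy `(cosh ρ)'' - t'² cosh ρ = -2 sinh² ρ cosh ρ` and
`(sinh ρ)'' + sinh ρ = -2 sinh² ρ sinh ρ`, which is the wave equation with `Λ = -2 sinh² ρ`. The
Virasoro constraint of the string is `ℓ²` times the one assumed for `(t, ρ)`.
-/

theorem deriv_pi_apply {ι : Type*} [Fintype ι] {f : ℝ → ι → ℝ} {f' : ι → ℝ} {x : ℝ}
    (h : HasDerivAt f f' x) (i : ι) : deriv (fun y => f y i) x = f' i :=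
  (hasDerivAt_pi.1 h i).deriv

theorem etaForm_five (u v : Fin 8 → ℝ) : etaForm 5 u v =
    -(u 0 * v 0) + u 1 * v 1 + u 2 * v 2 + u 3 * v 3 + u 4 * v 4 + u 5 * v 5 + u 6 * v 6
      - u 7 * v 7 := by
  rw [etaForm, Fin.sum_univ_eight]
  norm_num [etaSign]
  ring

theorem angular_eq_div_cosh {r r₁ t₁ t₂ : ℝ}
    (h : t₂ * cosh r ^ 2 + 2 * t₁ * r₁ * sinh r * cosh r = 0) :
    t₂ * cosh r + 2 * t₁ * r₁ * sinh r = 0 :=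
  mul_left_cancel₀ (cosh_pos r).ne' (by linear_combination h)

theorem radial_eqs_of_eom_of_virasoro {r r₁ r₂ t₁ : ℝ}
    (hEoM : r₂ + sinh r * cosh r * (t₁ ^ 2 + 1) = 0)
    (hVir : r₁ ^ 2 - t₁ ^ 2 * cosh r ^ 2 + sinh r ^ 2 = 0) :
    r₂ * sinh r + r₁ ^ 2 * cosh r - t₁ ^ 2 * cosh r = -2 * sinh r ^ 2 * cosh r ∧
      r₂ * cosh r + r₁ ^ 2 * sinh r + sinh r = -2 * sinh r ^ 2 * sinh r :=
  ⟨by linear_combination sinh r * hEoM + cosh r * hVir + t₁ ^ 2 * cosh r * cosh_sq_sub_sinh_sq r,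
    by linear_combination cosh r * hEoM + sinh r * hVir - sinh r * cosh_sq_sub_sinh_sq r⟩

section Pulsating

variable (ℓ : ℝ) (t ρ : ℝ → ℝ) (τ σ : ℝ)

def pulsatingAnsatz : Fin 8 → ℝ :=
  ![ℓ * cosh (ρ τ) * cos (t τ), 0, 0, ℓ * sinh (ρ τ) * cos σ, 0, ℓ * sinh (ρ τ) * sin σ, 0,
    ℓ * cosh (ρ τ) * sin (t τ)]

def pulsatingVelocity : Fin 8 → ℝ :=
  ![ℓ * (deriv ρ τ * sinh (ρ τ) * cos (t τ) - deriv t τ * cosh (ρ τ) * sin (t τ)), 0, 0,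
    ℓ * deriv ρ τ * cosh (ρ τ) * cos σ, 0, ℓ * deriv ρ τ * cosh (ρ τ) * sin σ, 0,
    ℓ * (deriv ρ τ * sinh (ρ τ) * sin (t τ) + deriv t τ * cosh (ρ τ) * cos (t τ))]

def pulsatingTangent : Fin 8 → ℝ :=
  ![0, 0, 0, -(ℓ * sinh (ρ τ) * sin σ), 0, ℓ * sinh (ρ τ) * cos σ, 0, 0]

def pulsatingSpatialPart : Fin 8 → ℝ :=
  ![0, 0, 0, ℓ * sinh (ρ τ) * cos σ, 0, ℓ * sinh (ρ τ) * sin σ, 0, 0]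

theorem hasDerivAt_pulsatingAnsatz_sigma :
    HasDerivAt (fun σ => pulsatingAnsatz ℓ t ρ τ σ) (pulsatingTangent ℓ ρ τ σ) σ := by
  simp only [pulsatingAnsatz, pulsatingTangent, hasDerivAt_pi, Fin.forall_fin_succ,
    IsEmpty.forall_iff, and_true, Matrix.cons_val_zero, Matrix.cons_val_succ]
  have hcos := (hasDerivAt_cos σ).const_mul (ℓ * sinh (ρ τ))
  have hsin := (hasDerivAt_sin σ).const_mul (ℓ * sinh (ρ τ))
  refine ⟨hasDerivAt_const _ _, hasDerivAt_const _ _, hasDerivAt_const _ _, ?_,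
    hasDerivAt_const _ _, hsin, hasDerivAt_const _ _, hasDerivAt_const _ _⟩
  simpa only [mul_neg] using hcos

theorem hasDerivAt_pulsatingTangent_sigma :
    HasDerivAt (fun σ => pulsatingTangent ℓ ρ τ σ) (-pulsatingSpatialPart ℓ ρ τ σ) σ := by
  simp only [pulsatingTangent, pulsatingSpatialPart, hasDerivAt_pi, Fin.forall_fin_succ,
    IsEmpty.forall_iff, and_true, Matrix.cons_val_zero, Matrix.cons_val_succ, Pi.neg_apply,
    neg_zero]
  have hcos := (hasDerivAt_cos σ).const_mul (ℓ * sinh (ρ τ))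
  have hsin := (hasDerivAt_sin σ).const_mul (ℓ * sinh (ρ τ))
  refine ⟨hasDerivAt_const _ _, hasDerivAt_const _ _, hasDerivAt_const _ _, hsin.neg,
    hasDerivAt_const _ _, ?_, hasDerivAt_const _ _, hasDerivAt_const _ _⟩
  simpa only [mul_neg] using hcos

theorem hasDerivAt_pulsatingAnsatz_tau (ht : DifferentiableAt ℝ t τ)
    (hρ : DifferentiableAt ℝ ρ τ) :
    HasDerivAt (fun τ => pulsatingAnsatz ℓ t ρ τ σ) (pulsatingVelocity ℓ t ρ τ σ) τ := by
  simp only [pulsatingAnsatz, pulsatingVelocity, hasDerivAt_pi, Fin.forall_fin_succ,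
    IsEmpty.forall_iff, and_true, Matrix.cons_val_zero, Matrix.cons_val_succ]
  have hcosh := hρ.hasDerivAt.cosh.const_mul ℓ
  have hsinh := hρ.hasDerivAt.sinh.const_mul ℓ
  refine ⟨(hcosh.mul ht.hasDerivAt.cos).congr_deriv (by ring), hasDerivAt_const _ _,
    hasDerivAt_const _ _, (hsinh.mul_const _).congr_deriv (by ring), hasDerivAt_const _ _,
    (hsinh.mul_const _).congr_deriv (by ring), hasDerivAt_const _ _,
    (hcosh.mul ht.hasDerivAt.sin).congr_deriv (by ring)⟩

theorem hasDerivAt_pulsatingVelocity_tau (ht : DifferentiableAt ℝ t τ)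
    (hρ : DifferentiableAt ℝ ρ τ) (ht' : DifferentiableAt ℝ (deriv t) τ)
    (hρ' : DifferentiableAt ℝ (deriv ρ) τ)
    (hEoMt : deriv (deriv t) τ * cosh (ρ τ) ^ 2
      + 2 * deriv t τ * deriv ρ τ * sinh (ρ τ) * cosh (ρ τ) = 0)
    (hEoMρ : deriv (deriv ρ) τ + sinh (ρ τ) * cosh (ρ τ) * (deriv t τ ^ 2 + 1) = 0)
    (hVir : deriv ρ τ ^ 2 - deriv t τ ^ 2 * cosh (ρ τ) ^ 2 + sinh (ρ τ) ^ 2 = 0) :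
    HasDerivAt (fun τ => pulsatingVelocity ℓ t ρ τ σ)
      ((-2 * sinh (ρ τ) ^ 2) • pulsatingAnsatz ℓ t ρ τ σ - pulsatingSpatialPart ℓ ρ τ σ) τ := by
  simp only [pulsatingAnsatz, pulsatingVelocity, pulsatingSpatialPart, hasDerivAt_pi,
    Fin.forall_fin_succ, IsEmpty.forall_iff, and_true, Matrix.cons_val_zero,
    Matrix.cons_val_succ, Pi.sub_apply, Pi.smul_apply, smul_eq_mul, mul_zero, sub_zero]
  have hangular := angular_eq_div_cosh hEoMt
  obtain ⟨hcosh, hsinh⟩ := radial_eqs_of_eom_of_virasoro hEoMρ hVir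
  have hr₁ : HasDerivAt (fun x => deriv ρ x * sinh (ρ x))
      (deriv (deriv ρ) τ * sinh (ρ τ) + deriv ρ τ * (cosh (ρ τ) * deriv ρ τ)) τ :=
    hρ'.hasDerivAt.mul hρ.hasDerivAt.sinh
  have ht₁ : HasDerivAt (fun x => deriv t x * cosh (ρ x))
      (deriv (deriv t) τ * cosh (ρ τ) + deriv t τ * (sinh (ρ τ) * deriv ρ τ)) τ :=
    ht'.hasDerivAt.mul hρ.hasDerivAt.cosh
  have hs₁ : HasDerivAt (fun x => ℓ * deriv ρ x * cosh (ρ x))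
      (ℓ * deriv (deriv ρ) τ * cosh (ρ τ) + ℓ * deriv ρ τ * (sinh (ρ τ) * deriv ρ τ)) τ :=
    (hρ'.hasDerivAt.const_mul ℓ).mul hρ.hasDerivAt.cosh
  refine ⟨((hr₁.mul ht.hasDerivAt.cos).sub (ht₁.mul ht.hasDerivAt.sin)).const_mul ℓ
      |>.congr_deriv ?_, hasDerivAt_const _ _, hasDerivAt_const _ _,
    (hs₁.mul_const _).congr_deriv ?_, hasDerivAt_const _ _,
    (hs₁.mul_const _).congr_deriv ?_, hasDerivAt_const _ _,
    ((hr₁.mul ht.hasDerivAt.sin).add (ht₁.mul ht.hasDerivAt.cos)).const_mul ℓ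
      |>.congr_deriv ?_⟩
  · linear_combination ℓ * cos (t τ) * hcosh - ℓ * sin (t τ) * hangular
  · linear_combination ℓ * cos σ * hsinh
  · linear_combination ℓ * sin σ * hsinh
  · linear_combination ℓ * sin (t τ) * hcosh + ℓ * cos (t τ) * hangular

theorem etaForm_pulsatingAnsatz_self :
    etaForm 5 (pulsatingAnsatz ℓ t ρ τ σ) (pulsatingAnsatz ℓ t ρ τ σ) = -ℓ ^ 2 := by
  simp only [etaForm_five, pulsatingAnsatz, Matrix.cons_val_zero, Matrix.cons_val_one,
    Matrix.cons_val]
  linear_combination ℓ ^ 2 * (sinh (ρ τ) ^ 2 * sin_sq_add_cos_sq σ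
    - cosh (ρ τ) ^ 2 * sin_sq_add_cos_sq (t τ) - cosh_sq_sub_sinh_sq (ρ τ))

theorem etaForm_pulsatingVelocity_pulsatingTangent :
    etaForm 5 (pulsatingVelocity ℓ t ρ τ σ) (pulsatingTangent ℓ ρ τ σ) = 0 := by
  simp only [etaForm_five, pulsatingVelocity, pulsatingTangent, Matrix.cons_val_zero,
    Matrix.cons_val_one, Matrix.cons_val]
  ring

theorem etaForm_pulsatingTangent_self :
    etaForm 5 (pulsatingTangent ℓ ρ τ σ) (pulsatingTangent ℓ ρ τ σ) = ℓ ^ 2 * sinh (ρ τ) ^ 2 := by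
  simp only [etaForm_five, pulsatingTangent, Matrix.cons_val_zero, Matrix.cons_val_one,
    Matrix.cons_val]
  linear_combination ℓ ^ 2 * sinh (ρ τ) ^ 2 * sin_sq_add_cos_sq σ

theorem etaForm_pulsatingVelocity_self :
    etaForm 5 (pulsatingVelocity ℓ t ρ τ σ) (pulsatingVelocity ℓ t ρ τ σ)
      = ℓ ^ 2 * (deriv ρ τ ^ 2 - deriv t τ ^ 2 * cosh (ρ τ) ^ 2) := by
  simp only [etaForm_five, pulsatingVelocity, Matrix.cons_val_zero, Matrix.cons_val_one,
    Matrix.cons_val]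
  linear_combination ℓ ^ 2 * (deriv ρ τ ^ 2 * cosh (ρ τ) ^ 2 * sin_sq_add_cos_sq σ
    - (deriv ρ τ ^ 2 * sinh (ρ τ) ^ 2 + deriv t τ ^ 2 * cosh (ρ τ) ^ 2) * sin_sq_add_cos_sq (t τ)
    + deriv ρ τ ^ 2 * cosh_sq_sub_sinh_sq (ρ τ))

end Pulsating

theorem isConformalString_pulsatingAnsatz (ℓ : ℝ) {t ρ : ℝ → ℝ}
    (ht : Differentiable ℝ t) (ht' : Differentiable ℝ (deriv t))
    (hρ : Differentiable ℝ ρ) (hρ' : Differentiable ℝ (deriv ρ))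
    (hEoMt : ∀ τ, deriv (deriv t) τ * cosh (ρ τ) ^ 2
      + 2 * deriv t τ * deriv ρ τ * sinh (ρ τ) * cosh (ρ τ) = 0)
    (hEoMρ : ∀ τ, deriv (deriv ρ) τ + sinh (ρ τ) * cosh (ρ τ) * (deriv t τ ^ 2 + 1) = 0)
    (hVir : ∀ τ, deriv ρ τ ^ 2 - deriv t τ ^ 2 * cosh (ρ τ) ^ 2 + sinh (ρ τ) ^ 2 = 0) :
    IsConformalString 5 ℓ (pulsatingAnsatz ℓ t ρ) (fun τ _ => -2 * sinh (ρ τ) ^ 2) := by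
  have hτ : ∀ τ σ μ, deriv (fun τ => pulsatingAnsatz ℓ t ρ τ σ μ) τ
      = pulsatingVelocity ℓ t ρ τ σ μ := fun τ σ =>
    deriv_pi_apply (hasDerivAt_pulsatingAnsatz_tau ℓ t ρ τ σ (ht τ) (hρ τ))
  have hσ : ∀ τ σ μ, deriv (fun σ => pulsatingAnsatz ℓ t ρ τ σ μ) σ
      = pulsatingTangent ℓ ρ τ σ μ := fun τ σ =>
    deriv_pi_apply (hasDerivAt_pulsatingAnsatz_sigma ℓ t ρ τ σ)
  refine ⟨fun τ σ μ => ?_, etaForm_pulsatingAnsatz_self ℓ t ρ, fun τ σ => ?_, fun τ σ => ?_⟩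
  · simp only [hτ, hσ]
    rw [deriv_pi_apply (hasDerivAt_pulsatingVelocity_tau ℓ t ρ τ σ (ht τ) (hρ τ) (ht' τ) (hρ' τ)
        (hEoMt τ) (hEoMρ τ) (hVir τ)),
      deriv_pi_apply (hasDerivAt_pulsatingTangent_sigma ℓ ρ τ σ)]
    simp only [Pi.sub_apply, Pi.smul_apply, Pi.neg_apply, smul_eq_mul]
    ring
  · simp only [hτ, hσ]
    exact etaForm_pulsatingVelocity_pulsatingTangent ℓ t ρ τ σ
  · simp only [hτ, hσ]
    rw [etaForm_pulsatingVelocity_self, etaForm_pulsatingTangent_self]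
    linear_combination ℓ ^ 2 * hVir τ

/-- The pulsating closed-string ansatz of the stringy membrane solves the
conformal-gauge string system on AdS₇ of radius ℓ = 2, with Λ = −2 sinh²ρ and induced sphere
multiplier Λ̃ = η(∂σY,∂σY) = 4 sinh²ρ. -/
theorem pulsating_ansatz_is_conformal_string (t ρ : ℝ → ℝ)
    (ht1 : Differentiable ℝ t) (ht2 : Differentiable ℝ (deriv t))
    (hρ1 : Differentiable ℝ ρ) (hρ2 : Differentiable ℝ (deriv ρ))
    (hEoMt : ∀ τ, deriv (deriv t) τ * Real.cosh (ρ τ) ^ 2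
      + 2 * deriv t τ * deriv ρ τ * Real.sinh (ρ τ) * Real.cosh (ρ τ) = 0)
    (hEoMρ : ∀ τ, deriv (deriv ρ) τ
      + Real.sinh (ρ τ) * Real.cosh (ρ τ) * ((deriv t τ) ^ 2 + 1) = 0)
    (hVir : ∀ τ, (deriv ρ τ) ^ 2 - (deriv t τ) ^ 2 * Real.cosh (ρ τ) ^ 2
      + Real.sinh (ρ τ) ^ 2 = 0) :
    IsConformalString 5 2
      (fun τ σ =>
        ![2 * Real.cosh (ρ τ) * Real.cos (t τ),
          0, 0,
          2 * Real.sinh (ρ τ) * Real.cos σ,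
          0,
          2 * Real.sinh (ρ τ) * Real.sin σ,
          0,
          2 * Real.cosh (ρ τ) * Real.sin (t τ)])
      (fun τ _ => -2 * Real.sinh (ρ τ) ^ 2) ∧
    (∀ τ σ : ℝ,
      etaForm 5
        (fun μ => deriv (fun s =>
          (![2 * Real.cosh (ρ τ) * Real.cos (t τ),
             0, 0,
             2 * Real.sinh (ρ τ) * Real.cos s,
             0,
             2 * Real.sinh (ρ τ) * Real.sin s,
             0,
             2 * Real.cosh (ρ τ) * Real.sin (t τ)] : Fin 8 → ℝ) μ) σ)
        (fun μ => deriv (fun s =>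
          (![2 * Real.cosh (ρ τ) * Real.cos (t τ),
             0, 0,
             2 * Real.sinh (ρ τ) * Real.cos s,
             0,
             2 * Real.sinh (ρ τ) * Real.sin s,
             0,
             2 * Real.cosh (ρ τ) * Real.sin (t τ)] : Fin 8 → ℝ) μ) σ)
      = 4 * Real.sinh (ρ τ) ^ 2) := by
  refine ⟨isConformalString_pulsatingAnsatz 2 ht1 ht2 hρ1 hρ2 hEoMt hEoMρ hVir, fun τ σ => ?_⟩
  change etaForm 5 (fun μ => deriv (fun s => pulsatingAnsatz 2 t ρ τ s μ) σ)
    (fun μ => deriv (fun s => pulsatingAnsatz 2 t ρ τ s μ) σ) = _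
  simp only [deriv_pi_apply (hasDerivAt_pulsatingAnsatz_sigma 2 t ρ τ σ)]
  rw [etaForm_pulsatingTangent_self]
  norm_num
end
end

section
/- In the long-string limit ω → 1⁺ one has S(ω) → +∞, E(ω) − S(ω) → +∞, and the anomalous dimension exhibits logarithmic scaling: lim_{ω → 1⁺} (E(ω) − S(ω)) / ln S(ω) = √λ/π. -/
noncomputable section

open Real

/-- Complete elliptic integral of the first kind,
K(m) = ∫₀^{π/2} (1 − m sin²θ)^{−1/2} dθ. -/
def ellK (m : ℝ) : ℝ := ∫ θ in (0:ℝ)..(π / 2), (Real.sqrt (1 - m * Real.sin θ ^ 2))⁻¹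

/-- Complete elliptic integral of the second kind,
E(m) = ∫₀^{π/2} (1 − m sin²θ)^{1/2} dθ. -/
def ellE (m : ℝ) : ℝ := ∫ θ in (0:ℝ)..(π / 2), Real.sqrt (1 - m * Real.sin θ ^ 2)

/-- The GKP energy E(ω) = (2√λ/π)·(ω/(ω²−1))·E(1/ω²), with √λ = L². -/
def gkpE (L ω : ℝ) : ℝ := (2 * L ^ 2 / π) * (ω / (ω ^ 2 - 1)) * ellE (1 / ω ^ 2)

/-- The GKP spin S(ω) = (2√λ/π)·((ω²/(ω²−1))·E(1/ω²) − K(1/ω²)), with √λ = L². -/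
def gkpS (L ω : ℝ) : ℝ :=
  (2 * L ^ 2 / π) * ((ω ^ 2 / (ω ^ 2 - 1)) * ellE (1 / ω ^ 2) - ellK (1 / ω ^ 2))

/-! The substitution `u = √m cos θ` integrates `√m sin θ / √(1 - m sin² θ)` over `[0, π/2]`
to `arsinh √(m / (1 - m)) = log (1 + √m) - log (1 - m) / 2`, and this integrand falls short of
the integrand of `K` by at most `1`, because `0 ≤ 1 - √m sin θ ≤ √(1 - m sin² θ)`. Hence
`K(m) = -log (1 - m) / 2 + O(1)` as `m → 1⁻`, while `1 ≤ E(m) ≤ π/2`. With `m = 1/ω²` and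
`x = ω² / (ω² - 1) → ∞` this gives `S = (2√λ/π)(x E - K) ≍ x`, so `log S = log x + O(1)`, and
`E - S = (2√λ/π)(K - ω E / (ω + 1)) = (√λ/π) log x + O(1)`. -/

open Set Filter Topology Asymptotics intervalIntegral

section Asymptotics

variable {α : Type*} {l : Filter α} {f g : α → ℝ}

lemma isBigO_one_of_eventually_mem_Icc {a b : ℝ} (h : ∀ᶠ x in l, f x ∈ Icc a b) :
    f =O[l] fun _ => (1 : ℝ) :=
  (isBigO_one_iff ℝ).2 <| isBoundedUnder_of_eventually_le (a := max |a| |b|) <| by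
    filter_upwards [h] with x hx using abs_le_max_abs_abs hx.1 hx.2

lemma tendsto_div_of_isBigO_sub {a : ℝ} (hg : Tendsto g l atTop)
    (h : (fun x => f x - a * g x) =O[l] fun _ => (1 : ℝ)) :
    Tendsto (fun x => f x / g x) l (𝓝 a) := by
  have h0 : Tendsto (fun x => (f x - a * g x) / g x) l (𝓝 0) :=
    (h.trans_isLittleO <| (isLittleO_one_left_iff ℝ).2 <|
      tendsto_norm_atTop_atTop.comp hg).tendsto_div_nhds_zero
  rw [← zero_add a]
  refine (h0.add_const a).congr' ?_
  filter_upwards [hg.eventually_ne_atTop 0] with x hx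
  field_simp
  ring

lemma tendsto_atTop_of_isBigO_sub {a : ℝ} (ha : 0 < a) (hg : Tendsto g l atTop)
    (h : (fun x => f x - a * g x) =O[l] fun _ => (1 : ℝ)) : Tendsto f l atTop :=
  ((tendsto_div_of_isBigO_sub hg h).pos_mul_atTop ha hg).congr' <| by
    filter_upwards [hg.eventually_ne_atTop 0] with x hx using div_mul_cancel₀ _ hx

lemma isBigO_log_sub_log {a b : ℝ} (ha : 0 < a) (hg : ∀ᶠ x in l, 0 < g x)
    (hlo : ∀ᶠ x in l, a * g x ≤ f x) (hhi : ∀ᶠ x in l, f x ≤ b * g x) :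
    (fun x => log (f x) - log (g x)) =O[l] fun _ => (1 : ℝ) := by
  refine isBigO_one_of_eventually_mem_Icc (a := log a) (b := log b) ?_
  filter_upwards [hg, hlo, hhi] with x hgx hlox hhix
  have hfx : 0 < f x := lt_of_lt_of_le (by positivity) hlox
  rw [← log_div hfx.ne' hgx.ne']
  exact ⟨log_le_log ha ((le_div_iff₀ hgx).2 hlox),
    log_le_log (div_pos hfx hgx) ((div_le_iff₀ hgx).2 hhix)⟩

end Asymptotics

lemma one_sub_mul_sin_sq_pos {m : ℝ} (hm : m < 1) (θ : ℝ) : 0 < 1 - m * sin θ ^ 2 := by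
  have h1 := sin_sq_le_one θ
  have h0 := sq_nonneg (sin θ)
  rcases le_total 0 m with hm0 | hm0 <;> nlinarith

lemma continuous_sqrt_one_sub_mul_sin_sq (m : ℝ) :
    Continuous fun θ => √(1 - m * sin θ ^ 2) := by
  fun_prop

lemma continuous_inv_sqrt_one_sub_mul_sin_sq {m : ℝ} (hm : m < 1) :
    Continuous fun θ => (√(1 - m * sin θ ^ 2))⁻¹ :=
  (continuous_sqrt_one_sub_mul_sin_sq m).inv₀ fun θ =>
    (sqrt_pos.2 (one_sub_mul_sin_sq_pos hm θ)).ne'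

lemma continuous_sqrt_mul_sin_div {m : ℝ} (hm : m < 1) :
    Continuous fun θ => √m * sin θ / √(1 - m * sin θ ^ 2) := by
  simp_rw [div_eq_mul_inv]
  exact (by fun_prop : Continuous fun θ => √m * sin θ).mul
    (continuous_inv_sqrt_one_sub_mul_sin_sq hm)

lemma one_le_ellE {m : ℝ} (hm : m ≤ 1) : 1 ≤ ellE m := by
  have h : ∫ θ in (0:ℝ)..(π / 2), cos θ ≤ ellE m := by
    refine integral_mono_on (by positivity) (continuous_cos.intervalIntegrable _ _)
      ((continuous_sqrt_one_sub_mul_sin_sq m).intervalIntegrable _ _) fun θ hθ => ?_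
    have hcos : 0 ≤ cos θ := cos_nonneg_of_mem_Icc ⟨by linarith [hθ.1, pi_pos], hθ.2⟩
    refine le_sqrt_of_sq_le ?_
    nlinarith [sin_sq_add_cos_sq θ, sq_nonneg (sin θ)]
  simpa using h

lemma ellE_le_pi_div_two {m : ℝ} (hm : 0 ≤ m) : ellE m ≤ π / 2 := by
  have h : ellE m ≤ ∫ _ in (0:ℝ)..(π / 2), (1 : ℝ) :=
    integral_mono_on (by positivity)
      ((continuous_sqrt_one_sub_mul_sin_sq m).intervalIntegrable _ _) intervalIntegrable_const
      fun θ _ => sqrt_le_one.2 (by nlinarith [sq_nonneg (sin θ)])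
  simpa using h

lemma hasDerivAt_neg_arsinh_cos {m : ℝ} (hm0 : 0 ≤ m) (hm1 : m < 1) (θ : ℝ) :
    HasDerivAt (fun θ => -arsinh (√m * cos θ / √(1 - m)))
      (√m * sin θ / √(1 - m * sin θ ^ 2)) θ := by
  have hm1' : 0 < 1 - m := by linarith
  refine (((hasDerivAt_cos θ).const_mul √m).div_const √(1 - m)).arsinh.neg.congr_deriv ?_
  have hX : 1 + (√m * cos θ / √(1 - m)) ^ 2 = (1 - m * sin θ ^ 2) / (1 - m) := by
    rw [div_pow, mul_pow, sq_sqrt hm0, sq_sqrt hm1'.le, eq_div_iff hm1'.ne']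
    field_simp
    nlinarith [sin_sq_add_cos_sq θ]
  have hs := sqrt_pos.2 hm1'
  have hX' := sqrt_pos.2 (one_sub_mul_sin_sq_pos hm1 θ)
  rw [hX, sqrt_div' _ hm1'.le, smul_eq_mul]
  field_simp

lemma integral_sqrt_mul_sin_div {m : ℝ} (hm0 : 0 ≤ m) (hm1 : m < 1) :
    ∫ θ in (0:ℝ)..(π / 2), √m * sin θ / √(1 - m * sin θ ^ 2) = arsinh (√m / √(1 - m)) := by
  rw [integral_eq_sub_of_hasDerivAt (fun θ _ => hasDerivAt_neg_arsinh_cos hm0 hm1 θ)]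
  · simp
  · exact (continuous_sqrt_mul_sin_div hm1).intervalIntegrable _ _

lemma arsinh_sqrt_div_sqrt_one_sub {m : ℝ} (hm0 : 0 ≤ m) (hm1 : m < 1) :
    arsinh (√m / √(1 - m)) = log (1 + √m) - log (1 - m) / 2 := by
  have hm1' : 0 < 1 - m := by linarith
  have hs := sqrt_pos.2 hm1'
  have h1 : 1 + (√m / √(1 - m)) ^ 2 = (1 / √(1 - m)) ^ 2 := by
    rw [div_pow, div_pow, sq_sqrt hm0, sq_sqrt hm1'.le]
    field_simp
    ring
  rw [arsinh, h1, sqrt_sq (by positivity), ← add_div, log_div (by positivity) hs.ne',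
    log_sqrt hm1'.le, add_comm √m]

lemma sqrt_mul_sin_le_one {m : ℝ} (hm1 : m < 1) (θ : ℝ) : √m * sin θ ≤ 1 := by
  have := sqrt_le_one.2 hm1.le
  nlinarith [sqrt_nonneg m, sin_le_one θ]

lemma sqrt_mul_sin_div_le_inv_sqrt {m : ℝ} (hm1 : m < 1) (θ : ℝ) :
    √m * sin θ / √(1 - m * sin θ ^ 2) ≤ (√(1 - m * sin θ ^ 2))⁻¹ := by
  rw [div_eq_mul_inv]
  exact mul_le_of_le_one_left (by positivity) (sqrt_mul_sin_le_one hm1 θ)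

lemma inv_sqrt_le_sqrt_mul_sin_div_add_one {m θ : ℝ} (hm0 : 0 ≤ m) (hm1 : m < 1)
    (hθ : 0 ≤ sin θ) :
    (√(1 - m * sin θ ^ 2))⁻¹ ≤ √m * sin θ / √(1 - m * sin θ ^ 2) + 1 := by
  have hX := sqrt_pos.2 (one_sub_mul_sin_sq_pos hm1 θ)
  rw [inv_eq_one_div, div_add_one hX.ne', div_le_div_iff_of_pos_right hX, ← sub_le_iff_le_add']
  have ht0 : 0 ≤ √m * sin θ := by positivity
  have ht1 := sqrt_mul_sin_le_one hm1 θ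
  refine le_sqrt_of_sq_le ?_
  have : m * sin θ ^ 2 = (√m * sin θ) ^ 2 := by rw [mul_pow, sq_sqrt hm0]
  nlinarith

lemma arsinh_le_ellK {m : ℝ} (hm0 : 0 ≤ m) (hm1 : m < 1) :
    arsinh (√m / √(1 - m)) ≤ ellK m := by
  rw [← integral_sqrt_mul_sin_div hm0 hm1]
  exact integral_mono_on (by positivity)
    ((continuous_sqrt_mul_sin_div hm1).intervalIntegrable _ _)
    ((continuous_inv_sqrt_one_sub_mul_sin_sq hm1).intervalIntegrable _ _)
    fun θ _ => sqrt_mul_sin_div_le_inv_sqrt hm1 θ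

lemma ellK_le_arsinh_add {m : ℝ} (hm0 : 0 ≤ m) (hm1 : m < 1) :
    ellK m ≤ arsinh (√m / √(1 - m)) + π / 2 := by
  have hf := (continuous_sqrt_mul_sin_div hm1).intervalIntegrable
    (μ := MeasureTheory.volume) 0 (π / 2)
  have h : ellK m ≤ ∫ θ in (0:ℝ)..(π / 2), (√m * sin θ / √(1 - m * sin θ ^ 2) + 1) :=
    integral_mono_on (by positivity)
      ((continuous_inv_sqrt_one_sub_mul_sin_sq hm1).intervalIntegrable _ _)
      (hf.add intervalIntegrable_const) fun θ hθ =>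
        inv_sqrt_le_sqrt_mul_sin_div_add_one hm0 hm1
          (sin_nonneg_of_nonneg_of_le_pi hθ.1 (by linarith [hθ.2, pi_pos]))
  rwa [integral_add hf intervalIntegrable_const, integral_sqrt_mul_sin_div hm0 hm1,
    integral_const, smul_eq_mul, mul_one, sub_zero] at h

lemma ellK_add_half_log_mem_Icc {m : ℝ} (hm0 : 0 ≤ m) (hm1 : m < 1) :
    ellK m + log (1 - m) / 2 ∈ Icc 0 (log 2 + π / 2) := by
  have hlo := arsinh_le_ellK hm0 hm1
  have hhi := ellK_le_arsinh_add hm0 hm1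
  rw [arsinh_sqrt_div_sqrt_one_sub hm0 hm1] at hlo hhi
  have h0 : 0 ≤ log (1 + √m) := log_nonneg (by linarith [sqrt_nonneg m])
  have h2 : log (1 + √m) ≤ log 2 :=
    log_le_log (by positivity) (by linarith [sqrt_le_one.2 hm1.le])
  constructor <;> linarith

section GKP

variable {L ω : ℝ}

lemma one_div_sq_mem_Ico (hω : 1 < ω) : 1 / ω ^ 2 ∈ Ico 0 1 :=
  ⟨by positivity, by rw [div_lt_one (by positivity)]; nlinarith⟩

lemma log_one_sub_inv_sq (hω : 1 < ω) : log (1 - 1 / ω ^ 2) = -log (ω ^ 2 / (ω ^ 2 - 1)) := by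
  have : ω ^ 2 - 1 ≠ 0 := by nlinarith
  rw [← log_inv, inv_div]
  congr 1
  field_simp

lemma ellK_inv_sq_sub_half_log_mem_Icc (hω : 1 < ω) :
    ellK (1 / ω ^ 2) - log (ω ^ 2 / (ω ^ 2 - 1)) / 2 ∈ Icc 0 (log 2 + π / 2) := by
  have h := ellK_add_half_log_mem_Icc (one_div_sq_mem_Ico hω).1 (one_div_sq_mem_Ico hω).2
  rwa [log_one_sub_inv_sq hω, neg_div, ← sub_eq_add_neg] at h

lemma one_le_sq_div_sq_sub_one (hω : 1 < ω) : 1 ≤ ω ^ 2 / (ω ^ 2 - 1) := by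
  rw [le_div_iff₀ (by nlinarith)]
  linarith

lemma le_gkpS (hω : 1 < ω) :
    2 * L ^ 2 / π * (ω ^ 2 / (ω ^ 2 - 1) / 2 - (log 2 + π / 2)) ≤ gkpS L ω := by
  have hK := (ellK_inv_sq_sub_half_log_mem_Icc hω).2
  have hE := one_le_ellE (one_div_sq_mem_Ico hω).2.le
  have hx := one_le_sq_div_sq_sub_one hω
  set x := ω ^ 2 / (ω ^ 2 - 1)
  have hlog : log x ≤ x := (log_le_sub_one_of_pos (by positivity)).trans (by linarith)
  have hxE : x ≤ x * ellE (1 / ω ^ 2) := le_mul_of_one_le_right (by positivity) hE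
  exact mul_le_mul_of_nonneg_left (by linarith) (by positivity)

lemma gkpS_le (hω : 1 < ω) : gkpS L ω ≤ L ^ 2 * (ω ^ 2 / (ω ^ 2 - 1)) := by
  have hK := (ellK_inv_sq_sub_half_log_mem_Icc hω).1
  have hE := ellE_le_pi_div_two (one_div_sq_mem_Ico hω).1
  have hx := one_le_sq_div_sq_sub_one hω
  set x := ω ^ 2 / (ω ^ 2 - 1)
  have hlog : 0 ≤ log x := log_nonneg hx
  calc gkpS L ω ≤ 2 * L ^ 2 / π * (x * (π / 2)) := by
        rw [gkpS]
        gcongr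
        nlinarith
    _ = L ^ 2 * x := by field_simp

lemma gkpE_sub_gkpS (hω : 1 < ω) :
    gkpE L ω - gkpS L ω =
      2 * L ^ 2 / π * (ellK (1 / ω ^ 2) - ω / (ω + 1) * ellE (1 / ω ^ 2)) := by
  have h1 : ω ^ 2 - 1 ≠ 0 := by nlinarith
  have h2 : ω + 1 ≠ 0 := by linarith
  rw [gkpE, gkpS]
  field_simp
  ring

lemma gkpE_sub_gkpS_sub_log_mem_Icc (hω : 1 < ω) :
    gkpE L ω - gkpS L ω - L ^ 2 / π * log (ω ^ 2 / (ω ^ 2 - 1)) ∈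
      Icc (-L ^ 2) (2 * L ^ 2 / π * (log 2 + π / 2)) := by
  obtain ⟨hK0, hKC⟩ := ellK_inv_sq_sub_half_log_mem_Icc hω
  have hE := ellE_le_pi_div_two (one_div_sq_mem_Ico hω).1
  have hE0 : 0 ≤ ellE (1 / ω ^ 2) := zero_le_one.trans (one_le_ellE (one_div_sq_mem_Ico hω).2.le)
  have hω1 : ω / (ω + 1) ≤ 1 := by rw [div_le_one (by linarith)]; linarith
  have hT0 : 0 ≤ ω / (ω + 1) * ellE (1 / ω ^ 2) := by positivity
  have hT1 : ω / (ω + 1) * ellE (1 / ω ^ 2) ≤ π / 2 := by nlinarith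
  have hc : 0 ≤ 2 * L ^ 2 / π := by positivity
  have hL : -L ^ 2 = 2 * L ^ 2 / π * (-(π / 2)) := by field_simp
  have key : gkpE L ω - gkpS L ω - L ^ 2 / π * log (ω ^ 2 / (ω ^ 2 - 1)) = 2 * L ^ 2 / π *
      (ellK (1 / ω ^ 2) - log (ω ^ 2 / (ω ^ 2 - 1)) / 2 - ω / (ω + 1) * ellE (1 / ω ^ 2)) := by
    rw [gkpE_sub_gkpS hω]
    ring
  rw [key, hL]
  exact ⟨mul_le_mul_of_nonneg_left (by linarith) hc, mul_le_mul_of_nonneg_left (by linarith) hc⟩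

end GKP

lemma tendsto_sq_div_sq_sub_one_nhdsGT_one :
    Tendsto (fun ω : ℝ => ω ^ 2 / (ω ^ 2 - 1)) (𝓝[>] 1) atTop := by
  have h : Tendsto (fun ω : ℝ => ω ^ 2 - 1) (𝓝[>] 1) (𝓝[>] 0) := by
    refine tendsto_nhdsWithin_of_tendsto_nhds_of_eventually_within _ ?_ ?_
    · exact ((by fun_prop : Continuous fun ω : ℝ => ω ^ 2 - 1).tendsto' 1 0
        (by norm_num)).mono_left nhdsWithin_le_nhds
    · filter_upwards [self_mem_nhdsWithin] with ω (hω : 1 < ω)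
      simp only [mem_Ioi, sub_pos]
      nlinarith
  refine (tendsto_atTop_add_const_left _ 1 (tendsto_inv_nhdsGT_zero.comp h)).congr' ?_
  filter_upwards [h self_mem_nhdsWithin] with ω (hω : 0 < ω ^ 2 - 1)
  simp only [Function.comp]
  field_simp
  ring

/-- In the long-string limit ω → 1⁺, the spin diverges, the anomalous
dimension E − S diverges, and logarithmic scaling holds:
(E(ω) − S(ω))/ln S(ω) → √λ/π with √λ = L². -/
theorem gkp_long_string_log_scaling (L : ℝ) (hL : 0 < L) :
    Tendsto (fun ω => gkpS L ω) (𝓝[>] (1:ℝ)) atTop ∧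
    Tendsto (fun ω => gkpE L ω - gkpS L ω) (𝓝[>] (1:ℝ)) atTop ∧
    Tendsto (fun ω => (gkpE L ω - gkpS L ω) / Real.log (gkpS L ω))
      (𝓝[>] (1:ℝ)) (𝓝 (L ^ 2 / π)) := by
  set x : ℝ → ℝ := fun ω => ω ^ 2 / (ω ^ 2 - 1)
  have hx : Tendsto x (𝓝[>] 1) atTop := tendsto_sq_div_sq_sub_one_nhdsGT_one
  have hlogx : Tendsto (fun ω => log (x ω)) (𝓝[>] 1) atTop := tendsto_log_atTop.comp hx
  have hω : ∀ᶠ ω in 𝓝[>] (1:ℝ), 1 < ω := self_mem_nhdsWithin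
  have hSlo : ∀ᶠ ω in 𝓝[>] (1:ℝ), 2 * L ^ 2 / π / 4 * x ω ≤ gkpS L ω := by
    filter_upwards [hω, hx.eventually_ge_atTop (4 * (log 2 + π / 2))] with ω hω hxω
    refine le_trans ?_ (le_gkpS hω)
    have hc : 0 < 2 * L ^ 2 / π := by positivity
    nlinarith
  have hN : (fun ω => gkpE L ω - gkpS L ω - L ^ 2 / π * log (x ω)) =O[𝓝[>] 1]
      fun _ => (1 : ℝ) :=
    isBigO_one_of_eventually_mem_Icc (hω.mono fun _ => gkpE_sub_gkpS_sub_log_mem_Icc)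
  have hlogS := isBigO_log_sub_log (by positivity) (hx.eventually_gt_atTop 0) hSlo
    (hω.mono fun _ => gkpS_le)
  refine ⟨tendsto_atTop_mono' _ hSlo (hx.const_mul_atTop (by positivity)),
    tendsto_atTop_of_isBigO_sub (by positivity) hlogx hN, ?_⟩
  have := (tendsto_div_of_isBigO_sub hlogx hN).div
    (tendsto_div_of_isBigO_sub (a := 1) hlogx (by simpa using hlogS)) one_ne_zero
  rw [div_one] at this
  refine this.congr' ?_
  filter_upwards [hlogx.eventually_ne_atTop 0] with ω h using div_div_div_cancel_right₀ h _ _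
end
end
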